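/- Fix a strictly feasible starting point s ∈ ℝⁿ with s > 0 and A s = b, and let f^s(x) = Σᵢ cᵢ xᵢ ln(cᵢ xᵢ) − Σᵢ cᵢ xᵢ (1 + ln(sᵢ cᵢ)). For each μ ≥ 0, the convex program min{ μ cᵀx + f^s(x) : A x = b, x ≥ 0 } has a unique optimal solution x(μ), which is strictly positive. Moreover, the curve μ ↦ x(μ) is differentiable, satisfies x(0) = s, and satisfies the Physarum dynamics: d/dμ x(μ) = W(μ)(Aᵀ (A W(μ) Aᵀ)⁻¹ b − c), where W(μ) = diag(x₁(μ)/c₁,…,xₙ(μ)/cₙ). -/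

import Mathlib

open Matrix Filter Set Topology

/-- The real matrix obtained from an integer matrix by coercion of entries. -/
noncomputable def rmat {m n : ℕ} (A : Matrix (Fin m) (Fin n) ℤ) :
    Matrix (Fin m) (Fin n) ℝ :=
  A.map (Int.cast : ℤ → ℝ)

/-- The diagonal matrix `W = diag (x i / c i)`. -/
noncomputable def physW {n : ℕ} (c x : Fin n → ℝ) : Matrix (Fin n) (Fin n) ℝ :=
  Matrix.diagonal (fun i => x i / c i)

/-- The Physarum vector `q = W Aᵀ L⁻¹ b` where `L = A W Aᵀ`. -/
noncomputable def physQ {m n : ℕ} (B : Matrix (Fin m) (Fin n) ℝ) (b : Fin m → ℝ)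
    (c x : Fin n → ℝ) : Fin n → ℝ :=
  physW c x *ᵥ (Bᵀ *ᵥ ((B * physW c x * Bᵀ)⁻¹ *ᵥ b))

/-- The set of absolute values of determinants of square submatrices of `A` (as reals). -/
def subdets {m n : ℕ} (A : Matrix (Fin m) (Fin n) ℤ) : Set ℝ :=
  {d | ∃ (k : ℕ) (f : Fin k → Fin m) (g : Fin k → Fin n),
    Function.Injective f ∧ Function.Injective g ∧
    d = |((A.submatrix f g).det : ℝ)|}

/-- `x` is a solution of the Physarum dynamics `ẋ = q - x` on the time set `s`,
staying in the positive orthant. -/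
def IsPhysSolOn {m n : ℕ} (B : Matrix (Fin m) (Fin n) ℝ) (b : Fin m → ℝ)
    (c : Fin n → ℝ) (x : ℝ → Fin n → ℝ) (s : Set ℝ) : Prop :=
  ∀ t ∈ s, (∀ i, 0 < x t i) ∧ HasDerivWithinAt x (physQ B b c (x t) - x t) s t

/-- The entropy-regularized objective `μ cᵀx + f^s(x)` where
`f^s(x) = Σᵢ cᵢ xᵢ ln(cᵢ xᵢ) − Σᵢ cᵢ xᵢ (1 + ln(sᵢ cᵢ))`. -/
noncomputable def entObj {n : ℕ} (c : Fin n → ℤ) (s : Fin n → ℝ) (μ : ℝ)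
    (z : Fin n → ℝ) : ℝ :=
  μ * ((fun i => (c i : ℝ)) ⬝ᵥ z) +
    (∑ i, (c i : ℝ) * z i * Real.log ((c i : ℝ) * z i)) -
    ∑ i, (c i : ℝ) * z i * (1 + Real.log (s i * (c i : ℝ)))

/-! The KKT conditions of the entropic program say that its optimum has the form
`x = s ⊙ exp (C⁻¹ Aᵀ λ - μ)` for a multiplier `λ`. Any such point satisfying `A x = b` is the
unique optimum, since the objective minus its tangent at `x` is the Bregman divergence
`∑ cᵢ xᵢ klFun (zᵢ / xᵢ)`, and the tangent term vanishes on `{A z = b}`. A multiplier exists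
because it minimises the coercive dual function. Differentiating `A x(μ, λ(μ)) = b` gives
`A W Aᵀ λ' = b`; since `A W Aᵀ` is positive definite, the implicit function theorem makes `λ`
differentiable, and then `x' = W (Aᵀ λ' - c)` is the Physarum field. -/

open Real InformationTheory

section MulVecCLM

variable {𝕜 : Type*} [NontriviallyNormedField 𝕜] [CompleteSpace 𝕜] {ι κ : Type*} [Fintype κ]

noncomputable def Matrix.mulVecCLM (M : Matrix ι κ 𝕜) : (κ → 𝕜) →L[𝕜] (ι → 𝕜) :=
  LinearMap.toContinuousLinearMap M.mulVecLin

@[simp] lemma Matrix.mulVecCLM_apply (M : Matrix ι κ 𝕜) (v : κ → 𝕜) :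
    M.mulVecCLM v = M *ᵥ v := rfl

variable [Fintype ι] [DecidableEq ι] {M : Matrix ι ι 𝕜}

lemma Matrix.isInvertible_mulVecCLM (hM : IsUnit M.det) : M.mulVecCLM.IsInvertible :=
  .of_inverse (g := M⁻¹.mulVecCLM) (by ext1 v; simp [mulVec_mulVec, mul_nonsing_inv _ hM])
    (by ext1 v; simp [mulVec_mulVec, nonsing_inv_mul _ hM])

lemma Matrix.inverse_mulVecCLM (hM : IsUnit M.det) : M.mulVecCLM.inverse = M⁻¹.mulVecCLM :=
  ContinuousLinearMap.inverse_eq (by ext1 v; simp [mulVec_mulVec, mul_nonsing_inv _ hM])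
    (by ext1 v; simp [mulVec_mulVec, nonsing_inv_mul _ hM])

end MulVecCLM

lemma Matrix.mulVec_transpose_injective_of_rank_eq {R : Type*} [Field R] {ι κ : Type*}
    [Fintype ι] [Fintype κ] {B : Matrix ι κ R} (h : B.rank = Fintype.card ι) :
    Function.Injective Bᵀ.mulVec := by
  have := LinearMap.finrank_range_add_finrank_ker Bᵀ.mulVecLin
  rw [← Matrix.rank, rank_transpose, h, Module.finrank_fintype_fun_eq_card, add_eq_left,
    Submodule.finrank_eq_zero] at this
  exact LinearMap.ker_eq_bot.mp this

lemma Matrix.posDef_mul_diagonal_mul_transpose {ι κ : Type*} [Fintype ι] [Fintype κ]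
    [DecidableEq κ] {B : Matrix ι κ ℝ} (hB : Function.Injective Bᵀ.mulVec) {d : κ → ℝ}
    (hd : ∀ i, 0 < d i) : (B * diagonal d * Bᵀ).PosDef := by
  simpa using (PosDef.diagonal hd).conjTranspose_mul_mul_same (B := Bᵀ) hB

noncomputable def entropyTerm (c s μ t : ℝ) : ℝ :=
  μ * (c * t) + c * t * log (c * t) - c * t * (1 + log (s * c))

lemma entObj_eq_sum_entropyTerm {n : ℕ} (c : Fin n → ℤ) (s : Fin n → ℝ) (μ : ℝ)
    (z : Fin n → ℝ) : entObj c s μ z = ∑ i, entropyTerm (c i) (s i) μ (z i) := by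
  simp only [entObj, entropyTerm, dotProduct, Finset.mul_sum, ← Finset.sum_add_distrib,
    ← Finset.sum_sub_distrib]

lemma entropyTerm_sub_sub_eq_klFun {c s μ x t : ℝ} (hc : 0 < c) (hs : 0 < s) (hx : 0 < x)
    (ht : 0 ≤ t) :
    entropyTerm c s μ t - entropyTerm c s μ x - c * (μ + log (x / s)) * (t - x) =
      c * x * klFun (t / x) := by
  have hlog : log (x / s) = log x - log s := log_div hx.ne' hs.ne'
  rcases ht.eq_or_lt with rfl | ht
  · simp only [entropyTerm, klFun, log_mul hc.ne' hx.ne', log_mul hs.ne' hc.ne', hlog]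
    simp only [mul_zero, log_zero, add_zero, zero_mul, sub_self, zero_sub, zero_div, zero_add,
      sub_zero, mul_one]
    ring
  · simp only [entropyTerm, klFun, log_mul hc.ne' hx.ne', log_mul hs.ne' hc.ne',
      log_mul hc.ne' ht.ne', hlog, log_div ht.ne' hx.ne']
    field_simp
    ring

lemma sub_two_mul_abs_le_mul_exp_sub {c μ : ℝ} (hc : 0 < c) (t : ℝ) :
    |t| - 2 * c * |μ| ≤ c * exp (t / c - μ) - t := by
  rcases le_or_gt 0 t with ht | ht
  · -- `exp` lies above its tangent line at `log 2`, whose slope is `2`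
    have htangent := add_one_le_exp (t / c - μ - log 2)
    rw [exp_sub _ (log 2), exp_log two_pos] at htangent
    have hlog2 : log 2 ≤ 1 := by linarith [log_le_sub_one_of_pos two_pos]
    have : c * (t / c) = t := by field_simp
    rw [abs_of_nonneg ht]
    nlinarith [le_abs_self μ]
  · nlinarith [abs_of_neg ht, abs_nonneg μ, exp_pos (t / c - μ)]

section PrimalOfDual

variable {m n : ℕ} {B : Matrix (Fin m) (Fin n) ℝ} {c s : Fin n → ℝ}

variable (B c s) in
noncomputable def primalOfDual (μ : ℝ) (l : Fin m → ℝ) : Fin n → ℝ :=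
  fun i => s i * exp ((Bᵀ *ᵥ l) i / c i - μ)

lemma primalOfDual_pos (hs : ∀ i, 0 < s i) (μ : ℝ) (l : Fin m → ℝ) (i : Fin n) :
    0 < primalOfDual B c s μ l i :=
  mul_pos (hs i) (exp_pos _)

lemma primalOfDual_zero_zero : primalOfDual B c s 0 0 = s := by
  ext i; simp [primalOfDual]

lemma mul_add_log_primalOfDual_div (hc : ∀ i, 0 < c i) (hs : ∀ i, 0 < s i) (μ : ℝ)
    (l : Fin m → ℝ) (i : Fin n) :
    c i * (μ + log (primalOfDual B c s μ l i / s i)) = (Bᵀ *ᵥ l) i := by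
  rw [primalOfDual, mul_div_cancel_left₀ _ (hs i).ne', log_exp]
  field_simp [(hc i).ne']
  ring

lemma sum_entropyTerm_sub_sum_entropyTerm_primalOfDual (hc : ∀ i, 0 < c i)
    (hs : ∀ i, 0 < s i) {μ : ℝ} {l : Fin m → ℝ} {z : Fin n → ℝ} (hz : ∀ i, 0 ≤ z i)
    (hBz : B *ᵥ z = B *ᵥ primalOfDual B c s μ l) :
    ∑ i, entropyTerm (c i) (s i) μ (z i) -
        ∑ i, entropyTerm (c i) (s i) μ (primalOfDual B c s μ l i) =
      ∑ i, c i * primalOfDual B c s μ l i * klFun (z i / primalOfDual B c s μ l i) := by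
  set x := primalOfDual B c s μ l
  -- the gradient of the objective at `x` is `Bᵀ l`, which is orthogonal to `z - x`
  have horth : ∑ i, (Bᵀ *ᵥ l) i * (z i - x i) = 0 := by
    change (Bᵀ *ᵥ l) ⬝ᵥ (z - x) = 0
    rw [mulVec_transpose, ← dotProduct_mulVec, mulVec_sub, hBz, sub_self, dotProduct_zero]
  rw [← sub_zero (_ - _), ← horth, ← Finset.sum_sub_distrib, ← Finset.sum_sub_distrib]
  refine Finset.sum_congr rfl fun i _ => ?_
  rw [← mul_add_log_primalOfDual_div hc hs,
    entropyTerm_sub_sub_eq_klFun (hc i) (hs i) (primalOfDual_pos hs μ l i) (hz i)]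

lemma sum_entropyTerm_primalOfDual_le (hc : ∀ i, 0 < c i) (hs : ∀ i, 0 < s i) {μ : ℝ}
    {l : Fin m → ℝ} {z : Fin n → ℝ} (hz : ∀ i, 0 ≤ z i)
    (hBz : B *ᵥ z = B *ᵥ primalOfDual B c s μ l) :
    ∑ i, entropyTerm (c i) (s i) μ (primalOfDual B c s μ l i) ≤
      ∑ i, entropyTerm (c i) (s i) μ (z i) := by
  have := sum_entropyTerm_sub_sum_entropyTerm_primalOfDual hc hs hz hBz
  have hnonneg :
      0 ≤ ∑ i, c i * primalOfDual B c s μ l i * klFun (z i / primalOfDual B c s μ l i) :=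
    Finset.sum_nonneg fun i _ => mul_nonneg (mul_pos (hc i) (primalOfDual_pos hs μ l i)).le
      (klFun_nonneg (div_nonneg (hz i) (primalOfDual_pos hs μ l i).le))
  linarith

lemma eq_primalOfDual_of_sum_entropyTerm_eq (hc : ∀ i, 0 < c i) (hs : ∀ i, 0 < s i) {μ : ℝ}
    {l : Fin m → ℝ} {z : Fin n → ℝ} (hz : ∀ i, 0 ≤ z i)
    (hBz : B *ᵥ z = B *ᵥ primalOfDual B c s μ l)
    (heq : ∑ i, entropyTerm (c i) (s i) μ (z i) =
      ∑ i, entropyTerm (c i) (s i) μ (primalOfDual B c s μ l i)) :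
    z = primalOfDual B c s μ l := by
  have hx := primalOfDual_pos (B := B) (c := c) hs μ l
  have hsum := sum_entropyTerm_sub_sum_entropyTerm_primalOfDual hc hs hz hBz
  rw [heq, sub_self, eq_comm, Finset.sum_eq_zero_iff_of_nonneg fun i _ =>
    mul_nonneg (mul_pos (hc i) (hx i)).le (klFun_nonneg (div_nonneg (hz i) (hx i).le))] at hsum
  ext i
  have := hsum i (Finset.mem_univ i)
  rw [mul_eq_zero, klFun_eq_zero_iff (div_nonneg (hz i) (hx i).le),
    div_eq_one_iff_eq (hx i).ne'] at this
  exact this.resolve_left (mul_pos (hc i) (hx i)).ne'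

lemma primalOfDual_eq_of_mulVec_eq (hc : ∀ i, 0 < c i) (hs : ∀ i, 0 < s i) {μ : ℝ}
    {l₁ l₂ : Fin m → ℝ} (h : B *ᵥ primalOfDual B c s μ l₁ = B *ᵥ primalOfDual B c s μ l₂) :
    primalOfDual B c s μ l₁ = primalOfDual B c s μ l₂ :=
  have hx₁ := fun i => (primalOfDual_pos (B := B) (c := c) hs μ l₁ i).le
  have hx₂ := fun i => (primalOfDual_pos (B := B) (c := c) hs μ l₂ i).le
  eq_primalOfDual_of_sum_entropyTerm_eq hc hs hx₁ h
    (le_antisymm (sum_entropyTerm_primalOfDual_le hc hs hx₂ h.symm)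
      (sum_entropyTerm_primalOfDual_le hc hs hx₁ h))

-- The negated Lagrange dual of the entropic program, with `b = B s` substituted.
variable (B c s) in
noncomputable def dualObjective (μ : ℝ) (l : Fin m → ℝ) : ℝ :=
  ∑ i, s i * (c i * exp ((Bᵀ *ᵥ l) i / c i - μ) - (Bᵀ *ᵥ l) i)

lemma hasStrictFDerivAt_primalOfDual (p : ℝ × (Fin m → ℝ)) :
    HasStrictFDerivAt (fun q : ℝ × (Fin m → ℝ) => primalOfDual B c s q.1 q.2)
      ((physW c (primalOfDual B c s p.1 p.2) * Bᵀ).mulVecCLM ∘L .snd ℝ ℝ (Fin m → ℝ) -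
        (ContinuousLinearMap.fst ℝ ℝ (Fin m → ℝ)).smulRight (primalOfDual B c s p.1 p.2)) p := by
  refine hasStrictFDerivAt_pi'' fun i => ?_
  set L := ContinuousLinearMap.proj i ∘L Bᵀ.mulVecCLM ∘L .snd ℝ ℝ (Fin m → ℝ)
  have hfun : (fun q : ℝ × (Fin m → ℝ) => primalOfDual B c s q.1 q.2 i) =
      fun q => s i * exp (L q * (c i)⁻¹ - q.1) := by
    ext q; simp [L, primalOfDual, div_eq_mul_inv]
  rw [hfun]
  refine ((((L.hasStrictFDerivAt).mul_const (c i)⁻¹).sub hasStrictFDerivAt_fst).exp.const_mul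
    (s i)).congr_fderiv (ContinuousLinearMap.ext fun q => ?_)
  simp only [ContinuousLinearMap.comp_apply, ContinuousLinearMap.coe_snd', mulVecCLM_apply,
    ContinuousLinearMap.proj_apply, Pi.sub_apply, _root_.smul_apply, _root_.sub_apply,
    smul_eq_mul, ContinuousLinearMap.coe_fst', physW, primalOfDual, div_eq_mul_inv,
    ContinuousLinearMap.comp_sub, ← mulVec_mulVec, mulVec_diagonal,
    ContinuousLinearMap.smulRight_apply, map_smul, L]
  ring

lemma hasFDerivAt_dualObjective (hc : ∀ i, 0 < c i) (μ : ℝ) (l : Fin m → ℝ) :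
    HasFDerivAt (dualObjective B c s μ)
      (∑ i, (primalOfDual B c s μ l i - s i) •
        (ContinuousLinearMap.proj i ∘L Bᵀ.mulVecCLM)) l := by
  set L := fun i => ContinuousLinearMap.proj i ∘L Bᵀ.mulVecCLM
  have hfun : dualObjective B c s μ =
      fun l => ∑ i, s i * (c i * exp (L i l * (c i)⁻¹ - μ) - L i l) := by
    ext l; simp [L, dualObjective, div_eq_mul_inv]
  rw [hfun]
  refine (HasFDerivAt.fun_sum fun i _ => (((((L i).hasFDerivAt).mul_const (c i)⁻¹).sub_const
    μ).exp.const_mul (c i) |>.sub (L i).hasFDerivAt).const_mul (s i)).congr_fderiv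
    (ContinuousLinearMap.ext fun v => ?_)
  simp only [ContinuousLinearMap.comp_apply, mulVecCLM_apply, ContinuousLinearMap.proj_apply,
    _root_.sum_apply, _root_.smul_apply, _root_.sub_apply, smul_eq_mul, primalOfDual,
    div_eq_mul_inv, L]
  refine Finset.sum_congr rfl fun i _ => ?_
  field_simp [(hc i).ne']

lemma mulVec_primalOfDual_eq_of_isLocalMin (hc : ∀ i, 0 < c i) {μ : ℝ} {l : Fin m → ℝ}
    (hl : IsLocalMin (dualObjective B c s μ) l) :
    B *ᵥ primalOfDual B c s μ l = B *ᵥ s := by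
  -- the gradient `B (x - s)` vanishes, so its pairing with itself does
  set v := B *ᵥ (primalOfDual B c s μ l - s)
  have hcrit := congrArg (· v) (hl.hasFDerivAt_eq_zero (hasFDerivAt_dualObjective hc μ l))
  simp only [_root_.sum_apply, _root_.smul_apply, ContinuousLinearMap.comp_apply,
    mulVecCLM_apply, ContinuousLinearMap.proj_apply, smul_eq_mul,
    _root_.zero_apply] at hcrit
  have hv : v ⬝ᵥ v = 0 := by
    rw [← hcrit, dotProduct_mulVec, ← mulVec_transpose, dotProduct_comm]
    rfl
  rw [← sub_eq_zero, ← mulVec_sub]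
  exact dotProduct_self_eq_zero.mp hv

lemma tendsto_dualObjective_cocompact (hc : ∀ i, 0 < c i) (hs : ∀ i, 0 < s i)
    (hB : Function.Injective Bᵀ.mulVec) (μ : ℝ) :
    Tendsto (dualObjective B c s μ) (cocompact _) atTop := by
  set M := diagonal s * Bᵀ
  have hM : Function.Injective M.mulVecLin := fun l₁ l₂ h => hB <| funext fun i =>
    mul_left_cancel₀ (hs i).ne' <| by
      simpa [M, ← mulVec_mulVec, mulVec_diagonal, mulVec_transpose] using congrFun h i
  have hnorm : Tendsto (fun l => ‖M *ᵥ l‖) (cocompact _) atTop :=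
    tendsto_norm_cocompact_atTop.comp
      (LinearMap.isClosedEmbedding_of_injective (LinearMap.ker_eq_bot.mpr hM)).tendsto_cocompact
  refine tendsto_atTop_mono (fun l => ?_) (tendsto_atTop_add_const_right _
    (-∑ i, s i * (2 * c i * |μ|)) hnorm)
  have hsup : ‖M *ᵥ l‖ ≤ ∑ i, s i * |(Bᵀ *ᵥ l) i| := by
    have hnonneg : ∀ i ∈ Finset.univ, 0 ≤ s i * |(Bᵀ *ᵥ l) i| :=
      fun i _ => mul_nonneg (hs i).le (abs_nonneg _)
    refine (pi_norm_le_iff_of_nonneg (Finset.sum_nonneg hnonneg)).mpr fun j => ?_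
    have := Finset.single_le_sum hnonneg (Finset.mem_univ j)
    simpa [M, ← mulVec_mulVec, mulVec_diagonal, abs_mul, abs_of_pos (hs j)] using this
  have hterm : ∑ i, s i * (|(Bᵀ *ᵥ l) i| - 2 * c i * |μ|) ≤ dualObjective B c s μ l :=
    Finset.sum_le_sum fun i _ => mul_le_mul_of_nonneg_left
      (sub_two_mul_abs_le_mul_exp_sub (hc i) _) (hs i).le
  simp only [mul_sub, Finset.sum_sub_distrib] at hterm
  linarith

lemma exists_mulVec_primalOfDual_eq (hc : ∀ i, 0 < c i) (hs : ∀ i, 0 < s i)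
    (hB : Function.Injective Bᵀ.mulVec) (μ : ℝ) :
    ∃ l, B *ᵥ primalOfDual B c s μ l = B *ᵥ s := by
  obtain ⟨l, hl⟩ := (continuous_iff_continuousAt.mpr fun l =>
    (hasFDerivAt_dualObjective hc μ l).continuousAt).exists_forall_le
      (tendsto_dualObjective_cocompact hc hs hB μ)
  exact ⟨l, mulVec_primalOfDual_eq_of_isLocalMin hc (.of_forall hl)⟩

lemma physW_mulVec_self (hc : ∀ i, 0 < c i) (x : Fin n → ℝ) : physW c x *ᵥ c = x := by
  ext i; simp [physW, mulVec_diagonal, div_mul_cancel₀ _ (hc i).ne']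

lemma exists_hasDerivAt_primalOfDual (hc : ∀ i, 0 < c i) (hs : ∀ i, 0 < s i)
    (hB : Function.Injective Bᵀ.mulVec) (μ₀ : ℝ) (l₀ : Fin m → ℝ) :
    ∃ g : ℝ → Fin m → ℝ,
      (∀ᶠ μ in 𝓝 μ₀, B *ᵥ primalOfDual B c s μ (g μ) = B *ᵥ primalOfDual B c s μ₀ l₀) ∧
      HasDerivAt (fun μ => primalOfDual B c s μ (g μ))
        (physW c (primalOfDual B c s μ₀ l₀) *ᵥ (Bᵀ *ᵥ
          ((B * physW c (primalOfDual B c s μ₀ l₀) * Bᵀ)⁻¹ *ᵥ (B *ᵥ primalOfDual B c s μ₀ l₀))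
            - c)) μ₀ := by
  set x₀ := primalOfDual B c s μ₀ l₀
  set L := B * physW c x₀ * Bᵀ
  have hL : IsUnit L.det := (posDef_mul_diagonal_mul_transpose hB fun i =>
    div_pos (primalOfDual_pos hs μ₀ l₀ i) (hc i)).det_pos.ne'.isUnit
  set D := (physW c x₀ * Bᵀ).mulVecCLM ∘L .snd ℝ ℝ (Fin m → ℝ) -
    (ContinuousLinearMap.fst ℝ ℝ (Fin m → ℝ)).smulRight x₀
  have hx : HasStrictFDerivAt (fun p : ℝ × (Fin m → ℝ) => primalOfDual B c s p.1 p.2) D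
      (μ₀, l₀) :=
    hasStrictFDerivAt_primalOfDual (μ₀, l₀)
  have hf := B.mulVecCLM.hasStrictFDerivAt.comp (μ₀, l₀) hx
  have hpartial : (B.mulVecCLM ∘L D) ∘L .inr ℝ ℝ (Fin m → ℝ) = L.mulVecCLM := by
    ext1 v; simp [D, L, mulVec_mulVec, Matrix.mul_assoc]
  have hinv : ((B.mulVecCLM ∘L D) ∘L .inr ℝ ℝ (Fin m → ℝ)).IsInvertible :=
    hpartial ▸ isInvertible_mulVecCLM hL
  set g := hf.implicitFunctionOfProdDomain hinv
  have hg₀ : g μ₀ = l₀ :=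
    (hf.eventually_apply_eq_iff_implicitFunctionOfProdDomain hinv).self_of_nhds.mp rfl
  have hg : HasDerivAt g (L⁻¹ *ᵥ (B *ᵥ x₀)) μ₀ := by
    have := (hf.hasStrictFDerivAt_implicitFunctionOfProdDomain hinv).hasFDerivAt.hasDerivAt
    rw [hpartial, inverse_mulVecCLM hL] at this
    simp only [D, ContinuousLinearMap.comp_sub, ContinuousLinearMap.sub_comp, neg_sub,
      _root_.sub_apply, ContinuousLinearMap.comp_apply, ContinuousLinearMap.inl_apply,
      ContinuousLinearMap.smulRight_apply, ContinuousLinearMap.coe_fst', one_smul,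
      ContinuousLinearMap.coe_snd', mulVecCLM_apply, mulVec_zero, sub_zero] at this
    exact this
  refine ⟨g, hf.eventually_apply_implicitFunctionOfProdDomain hinv, ?_⟩
  have := (hg₀ ▸ hx.hasFDerivAt).comp_hasDerivAt μ₀ ((hasDerivAt_id μ₀).prodMk hg)
  simpa [D, Function.comp_def, mulVec_sub, physW_mulVec_self hc, Matrix.mul_assoc] using this

end PrimalOfDual

theorem physarum_is_entropy_barrier_path {m n : ℕ} (A : Matrix (Fin m) (Fin n) ℤ)
    (hrank : (rmat A).rank = m)
    (b : Fin m → ℤ) (c : Fin n → ℤ) (hc : ∀ i, 0 < c i)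
    (s : Fin n → ℝ) (hs : ∀ i, 0 < s i)
    (hsb : rmat A *ᵥ s = fun j => (b j : ℝ)) :
    ∃ x : ℝ → Fin n → ℝ,
      x 0 = s ∧
      ∀ μ ∈ Set.Ici (0 : ℝ),
        ((rmat A *ᵥ x μ = fun j => (b j : ℝ)) ∧ (∀ i, 0 < x μ i)) ∧
        (∀ z : Fin n → ℝ, (rmat A *ᵥ z = fun j => (b j : ℝ)) → (∀ i, 0 ≤ z i) →
          entObj c s μ (x μ) ≤ entObj c s μ z ∧
          (entObj c s μ z = entObj c s μ (x μ) → z = x μ)) ∧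
        HasDerivWithinAt x
          (physW (fun i => (c i : ℝ)) (x μ) *ᵥ
            ((rmat A)ᵀ *ᵥ ((rmat A * physW (fun i => (c i : ℝ)) (x μ) * (rmat A)ᵀ)⁻¹ *ᵥ
              fun j => (b j : ℝ)) - fun i => (c i : ℝ)))
          (Set.Ici 0) μ := by
  have hc' : ∀ i, 0 < (c i : ℝ) := fun i => Int.cast_pos.mpr (hc i)
  have hB : Function.Injective (rmat A)ᵀ.mulVec :=
    mulVec_transpose_injective_of_rank_eq (by rw [hrank, Fintype.card_fin])
  choose l hl using exists_mulVec_primalOfDual_eq hc' hs hB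
  refine ⟨fun μ => primalOfDual (rmat A) (fun i => (c i : ℝ)) s μ (l μ), ?_, fun μ _ =>
    ⟨⟨(hl μ).trans hsb, primalOfDual_pos hs μ (l μ)⟩, fun z hz hz₀ => ?_, ?_⟩⟩
  · exact (primalOfDual_eq_of_mulVec_eq hc' hs (by rw [hl 0, primalOfDual_zero_zero])).trans
      primalOfDual_zero_zero
  · have hBz : rmat A *ᵥ z = rmat A *ᵥ primalOfDual (rmat A) (fun i => (c i : ℝ)) s μ (l μ) := by
      rw [hz, hl, hsb]
    rw [entObj_eq_sum_entropyTerm, entObj_eq_sum_entropyTerm]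
    exact ⟨sum_entropyTerm_primalOfDual_le hc' hs hz₀ hBz,
      eq_primalOfDual_of_sum_entropyTerm_eq hc' hs hz₀ hBz⟩
  · obtain ⟨g, hg, hderiv⟩ := exists_hasDerivAt_primalOfDual hc' hs hB μ (l μ)
    rw [hl μ, hsb] at hderiv
    refine (hderiv.congr_of_eventuallyEq ?_).hasDerivWithinAt
    filter_upwards [hg] with ν hν
    exact primalOfDual_eq_of_mulVec_eq hc' hs ((hl ν).trans (hν.trans (hl μ)).symm)
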